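/- Growth estimate for transported tangent vectors: Assume (A1), (A3), W ∈ C²((0,∞)), G ∈ C([0,1]), fix an integer N ≥ 1, E ∈ ℝ and ζ ∈ ℝ^N. Let (p, y) solve the variational system along the flow with p(0) ∈ Σ_N(E). Then, with L := L^inf(E), for all t > 0: ((1/N)∑_{i=1}^N y_i(t)²/k(p_i(t)))^{1/2} ≤ e^{−L·t}·((1/N)∑_{i=1}^N y_i(0)²/k(p_i(0)))^{1/2} + M_L(t)·√κ̄·max_{1≤i≤N}|ζ_i|. -/

import Mathlib

open MeasureTheory Real Set Filter
open Topology

noncomputable section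

/-- Discrete load: `G^N_i = N·∫_{i/N}^{(i+1)/N} G`. -/
def GN (G : ℝ → ℝ) (N : ℕ) (i : Fin N) : ℝ :=
  (N : ℝ) * ∫ x in ((i : ℝ) / N)..(((i : ℝ) + 1) / N), G x

/-- Membership in the discrete probability simplex `𝐏_N`. -/
def memPN (N : ℕ) (p : Fin N → ℝ) : Prop :=
  (∀ i, 0 < p i) ∧ (1 / (N : ℝ)) * ∑ i, p i = 1

/-- Discrete energy `ε_N(p) = (1/N) ∑ (W(p_i) − G^N_i p_i)`. -/
def energyN (W G : ℝ → ℝ) (N : ℕ) (p : Fin N → ℝ) : ℝ :=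
  (1 / (N : ℝ)) * ∑ i, (W (p i) - GN G N i * p i)

/-- Weighted mean of `W'(q) − G^N` with weights `k(q)`. -/
def lamN (k W' G : ℝ → ℝ) (N : ℕ) (q : Fin N → ℝ) : ℝ :=
  (∑ j, k (q j) * (W' (q j) - GN G N j)) / (∑ j, k (q j))

/-- Weighted mean `λ_ξ(q)` of a covector `ξ` with weights `k(q)`. -/
def lamXi (k : ℝ → ℝ) (N : ℕ) (q ξ : Fin N → ℝ) : ℝ :=
  (∑ j, k (q j) * ξ j) / (∑ j, k (q j))

/-- The gradient-flow vector field. -/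
def VN (k W' G : ℝ → ℝ) (N : ℕ) (q : Fin N → ℝ) : Fin N → ℝ :=
  fun i => -(k (q i)) * (W' (q i) - GN G N i - lamN k W' G N q)

/-- `p` solves the discrete gradient-flow ODE on `[0,∞)`. -/
def solvesODE (k W' G : ℝ → ℝ) (N : ℕ) (p : ℝ → Fin N → ℝ) : Prop :=
  ∀ t ∈ Set.Ici (0 : ℝ), HasDerivWithinAt p (VN k W' G N (p t)) (Set.Ici 0) t

/-- The Onsager operator `K(q)ξ`. -/
def KN (k : ℝ → ℝ) (N : ℕ) (q ξ : Fin N → ℝ) : Fin N → ℝ :=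
  fun i => k (q i) * (ξ i - lamXi k N q ξ)

/-- The sup norm `‖G‖_∞` on `[0,1]`. -/
def supNorm (G : ℝ → ℝ) : ℝ := sSup ((fun x => |G x|) '' Set.Icc 0 1)

/-- The lower bound `L^inf(E)` for the infinitesimal sublevel stretching rate. -/
def Linf (lamW Ck B1 B2 κl κu nG E : ℝ) : ℝ :=
  lamW - Ck / 2 * ((1 + κu / κl) * nG + (B1 * (E + nG) + B2) / κl)

open intervalIntegral in
lemma intExpAux (c a b : ℝ) (hc : c ≠ 0) :
    (∫ x in a..b, Real.exp (c*x)) = c⁻¹ * (Real.exp (c*b) - Real.exp (c*a)) := by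
  rw [integral_comp_mul_left (fun x => Real.exp x) hc, integral_exp, smul_eq_mul]

lemma gronwall_real {f f' : ℝ → ℝ} {δ K ε a b : ℝ}
    (hf : ContinuousOn f (Set.Icc a b))
    (hf' : ∀ x ∈ Set.Ico a b, HasDerivWithinAt f (f' x) (Set.Ici x) x)
    (ha : f a ≤ δ) (bound : ∀ x ∈ Set.Ico a b, f' x ≤ K * f x + ε) :
    ∀ x ∈ Set.Icc a b, f x ≤ gronwallBound δ K ε (x - a) :=
  le_gronwallBound_of_liminf_deriv_right_le hf
    (fun x hx _r hr => (hf' x hx).liminf_right_slope_le hr) ha bound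

lemma gronwallBound_eq (d K e x : ℝ) :
    gronwallBound d K e x = d * Real.exp (K * x) + e * gronwallBound 0 K 1 x := by
  by_cases hK : K = 0
  · subst hK; simp [gronwallBound]
  · simp only [gronwallBound, if_neg hK]; field_simp; ring

lemma abs_le_supNorm {G : ℝ → ℝ} (hG : ContinuousOn G (Set.Icc 0 1)) {x : ℝ}
    (hx : x ∈ Set.Icc (0:ℝ) 1) : |G x| ≤ supNorm G :=
  le_csSup ((isCompact_Icc.image_of_continuousOn hG.abs).bddAbove) ⟨x, hx, rfl⟩

lemma supNorm_nonneg {G : ℝ → ℝ} (hG : ContinuousOn G (Set.Icc 0 1)) :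
    0 ≤ supNorm G :=
  (abs_nonneg (G 0)).trans (abs_le_supNorm hG ⟨le_refl 0, zero_le_one⟩)

lemma abs_GN_le {G : ℝ → ℝ} (hG : ContinuousOn G (Set.Icc 0 1)) {N : ℕ}
    (i : Fin N) : |GN G N i| ≤ supNorm G := by
  have hN0 : (0:ℝ) < N := by
    have := i.pos; exact_mod_cast this
  have hle : (i:ℝ)/N ≤ ((i:ℝ)+1)/N := by gcongr; linarith
  have hiN : (i:ℝ) + 1 ≤ N := by exact_mod_cast i.isLt
  have hbnd : ∀ x ∈ Set.uIoc ((i:ℝ)/N) (((i:ℝ)+1)/N), ‖G x‖ ≤ supNorm G := by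
    intro x hx
    rw [Set.uIoc_of_le hle] at hx
    refine abs_le_supNorm hG ⟨?_, ?_⟩
    · exact le_trans (div_nonneg (Nat.cast_nonneg i) hN0.le) hx.1.le
    · exact hx.2.trans (by rw [div_le_one hN0]; linarith)
  have h := intervalIntegral.norm_integral_le_of_norm_le_const hbnd
  have habs : |((i:ℝ)+1)/N - (i:ℝ)/N| = 1/N := by
    rw [show ((i:ℝ)+1)/N - (i:ℝ)/N = 1/N from by ring, abs_of_pos (by positivity)]
  rw [habs, Real.norm_eq_abs] at h
  have heq : |GN G N i| = (N:ℝ) * |∫ x in ((i : ℝ) / N)..(((i : ℝ) + 1) / N), G x| := by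
    rw [GN, abs_mul, abs_of_pos hN0]
  rw [heq]
  calc (N:ℝ) * |∫ x in ((i : ℝ) / N)..(((i : ℝ) + 1) / N), G x|
      ≤ (N:ℝ) * (supNorm G * (1/N)) := mul_le_mul_of_nonneg_left h hN0.le
    _ = supNorm G := by field_simp

set_option maxHeartbeats 1000000 in
/-- Growth estimate for transported tangent vectors. -/
theorem tangent_vector_growth_estimate
    (k k' : ℝ → ℝ) (κl κu : ℝ)
    (hκl : 0 < κl) (hκlu : κl ≤ κu)
    (hk_cont : ContinuousOn k (Set.Ici 0))
    (hk_deriv : ∀ x > (0:ℝ), HasDerivAt k (k' x) x)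
    (hk'_cont : ContinuousOn k' (Set.Ioi 0))
    (hk_bnd : ∀ x ≥ (0:ℝ), κl * x ≤ k x ∧ k x ≤ κu * x)
    (W W' W'' : ℝ → ℝ)
    (hW' : ∀ x > (0:ℝ), HasDerivAt W (W' x) x)
    (hW'' : ∀ x > (0:ℝ), HasDerivAt W' (W'' x) x)
    (hW''c : ContinuousOn W'' (Set.Ioi 0))
    (lamW Ck B1 B2 B3 : ℝ) (hCk : 0 ≤ Ck) (hB1 : 0 ≤ B1) (hB2 : 0 ≤ B2)
    (hA3a : ∀ x > (0:ℝ), lamW ≤ k x * W'' x + 1 / 2 * k' x * W' x)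
    (hA3b : ∀ x > (0:ℝ), |k' x| ≤ Ck)
    (hA3c : ∀ x > (0:ℝ), |k x * W' x| ≤ B1 * W x + B2 + B3 * (x - 1))
    (G : ℝ → ℝ) (hG : ContinuousOn G (Set.Icc 0 1))
    (N : ℕ) (hN : 1 ≤ N) (E : ℝ) (ζ : Fin N → ℝ)
    (p y : ℝ → Fin N → ℝ)
    (hpP : ∀ t ∈ Set.Ici (0:ℝ), memPN N (p t))
    (hp : solvesODE k W' G N p)
    (hpE : energyN W G N (p 0) ≤ E)
    (hy0 : ∀ t ∈ Set.Ici (0:ℝ), ∑ i, y t i = 0)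
    (DV : (Fin N → ℝ) → (Fin N → ℝ) →L[ℝ] (Fin N → ℝ))
    (hDV : ∀ q : Fin N → ℝ, (∀ i, 0 < q i) → HasFDerivAt (VN k W' G N) (DV q) q)
    (hy : ∀ t ∈ Set.Ici (0:ℝ),
      HasDerivWithinAt y (DV (p t) (y t) + KN k N (p t) ζ) (Set.Ici 0) t) :
    ∀ t > (0:ℝ),
      Real.sqrt ((1 / (N:ℝ)) * ∑ i, (y t i)^2 / k (p t i))
        ≤ Real.exp (-(Linf lamW Ck B1 B2 κl κu (supNorm G) E) * t) *
            Real.sqrt ((1 / (N:ℝ)) * ∑ i, (y 0 i)^2 / k (p 0 i))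
          + (∫ s in (0:ℝ)..t, Real.exp (-(Linf lamW Ck B1 B2 κl κu (supNorm G) E) * s)) *
            Real.sqrt κu * (⨆ i, |ζ i|) := by
  intro t ht
  have ht0 : (0:ℝ) ≤ t := ht.le
  set nG := supNorm G with hnGdef
  set L := Linf lamW Ck B1 B2 κl κu nG E with hLdef
  set M := ⨆ i, |ζ i| with hMdef
  have hNR : (0:ℝ) < N := by exact_mod_cast hN
  have hNne : (N:ℝ) ≠ 0 := hNR.ne'
  have hnG : 0 ≤ nG := supNorm_nonneg hG
  have hGNle : ∀ i, |GN G N i| ≤ nG := fun i => abs_GN_le hG i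
  have hpos : ∀ s ∈ Set.Ici (0:ℝ), ∀ i, 0 < p s i := fun s hs => (hpP s hs).1
  have hsum : ∀ s ∈ Set.Ici (0:ℝ), ∑ i, p s i = (N:ℝ) := by
    intro s hs
    have h := (hpP s hs).2
    field_simp at h
    linarith
  have hkpos : ∀ s ∈ Set.Ici (0:ℝ), ∀ i, 0 < k (p s i) := by
    intro s hs i
    exact lt_of_lt_of_le (mul_pos hκl (hpos s hs i)) (hk_bnd _ (hpos s hs i).le).1
  have hSk : ∀ s ∈ Set.Ici (0:ℝ),
      κl * N ≤ (∑ j, k (p s j)) ∧ (∑ j, k (p s j)) ≤ κu * N := by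
    intro s hs
    constructor
    · calc κl * (N:ℝ) = ∑ j, κl * p s j := by
            rw [← Finset.mul_sum, hsum s hs]
        _ ≤ ∑ j, k (p s j) :=
            Finset.sum_le_sum fun j _ => (hk_bnd _ (hpos s hs j).le).1
    · calc (∑ j, k (p s j)) ≤ ∑ j, κu * p s j :=
            Finset.sum_le_sum fun j _ => (hk_bnd _ (hpos s hs j).le).2
        _ = κu * N := by rw [← Finset.mul_sum, hsum s hs]
  have hSkpos : ∀ s ∈ Set.Ici (0:ℝ), 0 < ∑ j, k (p s j) :=
    fun s hs => lt_of_lt_of_le (by positivity) (hSk s hs).1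
  haveI : Nonempty (Fin N) := Fin.pos_iff_nonempty.mp (by omega)
  have hM : ∀ i, |ζ i| ≤ M := by
    intro i; rw [hMdef]
    exact le_ciSup (f := fun j => |ζ j|) (Set.Finite.bddAbove (Set.finite_range _)) i
  have hM0 : 0 ≤ M := le_trans (abs_nonneg (ζ (Classical.arbitrary _))) (hM _)
  set ε := Real.sqrt κu * M with hεdef
  have hε0 : 0 ≤ ε := mul_nonneg (Real.sqrt_nonneg _) hM0
  have hpi : ∀ s ∈ Set.Ici (0:ℝ), ∀ i,
      HasDerivWithinAt (fun u => p u i) (VN k W' G N (p s) i) (Set.Ici 0) s :=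
    fun s hs => hasDerivWithinAt_pi.1 (hp s hs)
  have hkeyzero : ∀ s ∈ Set.Ici (0:ℝ),
      ∑ i, k (p s i) * (W' (p s i) - GN G N i - lamN k W' G N (p s)) = 0 := by
    intro s hs
    calc ∑ i, k (p s i) * (W' (p s i) - GN G N i - lamN k W' G N (p s))
        = ∑ i, (k (p s i) * (W' (p s i) - GN G N i)
            - lamN k W' G N (p s) * k (p s i)) :=
          Finset.sum_congr rfl fun i _ => by ring
      _ = (∑ i, k (p s i) * (W' (p s i) - GN G N i))
            - lamN k W' G N (p s) * ∑ i, k (p s i) := by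
          rw [Finset.sum_sub_distrib, Finset.mul_sum]
      _ = 0 := by
          rw [lamN, div_mul_cancel₀ _ (hSkpos s hs).ne']; ring
  have hE : ∀ s ∈ Set.Ici (0:ℝ), energyN W G N (p s) ≤ E := by
    have hFd : ∀ u ∈ Set.Ici (0:ℝ), HasDerivWithinAt (fun v => energyN W G N (p v))
        ((1/(N:ℝ)) * ∑ i, ((W' (p u i) - GN G N i) * VN k W' G N (p u) i))
        (Set.Ici 0) u := by
      intro u hu
      have h1 : ∀ i, HasDerivWithinAt (fun v => W (p v i) - GN G N i * p v i)
          ((W' (p u i) - GN G N i) * VN k W' G N (p u) i) (Set.Ici 0) u := by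
        intro i
        have hWc := (hW' (p u i) (hpos u hu i)).comp_hasDerivWithinAt u (hpi u hu i)
        have h2 := hWc.sub ((hpi u hu i).const_mul (GN G N i))
        exact h2.congr_deriv (by ring)
      have h3 := (HasDerivWithinAt.fun_sum (fun i (_ : i ∈ Finset.univ) => h1 i)).const_mul (1/(N:ℝ))
      exact h3
    have hF'le : ∀ u ∈ Set.Ici (0:ℝ),
        (1/(N:ℝ)) * ∑ i, ((W' (p u i) - GN G N i) * VN k W' G N (p u) i) ≤ 0 := by
      intro u hu
      have h0 := hkeyzero u hu
      have heq : ∑ i, ((W' (p u i) - GN G N i) * VN k W' G N (p u) i)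
          = -(∑ i, k (p u i) * (W' (p u i) - GN G N i - lamN k W' G N (p u))^2)
            - lamN k W' G N (p u)
              * ∑ i, k (p u i) * (W' (p u i) - GN G N i - lamN k W' G N (p u)) := by
        calc ∑ i, ((W' (p u i) - GN G N i) * VN k W' G N (p u) i)
            = ∑ i, (-(k (p u i) * (W' (p u i) - GN G N i - lamN k W' G N (p u))^2)
                - lamN k W' G N (p u)
                  * (k (p u i) * (W' (p u i) - GN G N i - lamN k W' G N (p u)))) :=
              Finset.sum_congr rfl fun i _ => by simp only [VN]; ring
          _ = _ := by
              rw [Finset.sum_sub_distrib, ← Finset.mul_sum, Finset.sum_neg_distrib]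
      have hnn : 0 ≤ ∑ i, k (p u i) * (W' (p u i) - GN G N i - lamN k W' G N (p u))^2 :=
        Finset.sum_nonneg fun i _ => mul_nonneg (hkpos u hu i).le (sq_nonneg _)
      rw [heq, h0, mul_zero, sub_zero]
      have h4 : (0:ℝ) ≤ 1/(N:ℝ) := by positivity
      nlinarith
    intro s hs
    have hcont : ContinuousOn (fun v => energyN W G N (p v)) (Set.Icc 0 s) := fun u hu =>
      ((hFd u hu.1).continuousWithinAt).mono Set.Icc_subset_Ici_self
    have hg := gronwall_real (K := 0) (ε := 0) (δ := E) hcont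
      (fun u hu => (hFd u hu.1).mono (Set.Ici_subset_Ici.2 hu.1))
      hpE (fun u hu => by simpa using hF'le u hu.1)
    have := hg s ⟨hs, le_rfl⟩
    simpa [gronwallBound] using this
  have hlam : ∀ s ∈ Set.Ici (0:ℝ),
      |lamN k W' G N (p s)| ≤ κu/κl*nG + (B1*(E+nG)+B2)/κl := by
    intro s hs
    have hWsum : ∑ i, W (p s i) ≤ (N:ℝ)*(E+nG) := by
      have hEs := hE s hs
      have h1 : ∑ i, GN G N i * p s i ≤ nG * N := by
        calc ∑ i, GN G N i * p s i ≤ ∑ i, nG * p s i :=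
              Finset.sum_le_sum fun i _ => mul_le_mul_of_nonneg_right
                ((le_abs_self _).trans (hGNle i)) (hpos s hs i).le
          _ = nG * N := by rw [← Finset.mul_sum, hsum s hs]
      have h2 : (1/(N:ℝ)) * ((∑ i, W (p s i)) - ∑ i, GN G N i * p s i) ≤ E := by
        rw [← Finset.sum_sub_distrib]
        exact hEs
      have h3 := mul_le_mul_of_nonneg_left h2 hNR.le
      rw [← mul_assoc, mul_one_div_cancel hNne, one_mul] at h3
      linarith
    have hkW' : |∑ i, k (p s i) * W' (p s i)| ≤ B1*((N:ℝ)*(E+nG)) + (N:ℝ)*B2 := by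
      calc |∑ i, k (p s i) * W' (p s i)| ≤ ∑ i, |k (p s i) * W' (p s i)| :=
            Finset.abs_sum_le_sum_abs _ _
        _ ≤ ∑ i, (B1 * W (p s i) + B2 + B3*(p s i - 1)) :=
            Finset.sum_le_sum fun i _ => hA3c _ (hpos s hs i)
        _ = B1 * (∑ i, W (p s i)) + (N:ℝ)*B2 + B3*((∑ i, p s i) - N) := by
            simp only [Finset.sum_add_distrib, Finset.sum_sub_distrib, ← Finset.mul_sum,
              Finset.sum_const, Finset.card_univ, Fintype.card_fin, nsmul_eq_mul, mul_one]
            try ring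
        _ ≤ B1*((N:ℝ)*(E+nG)) + (N:ℝ)*B2 := by
            rw [hsum s hs, sub_self, mul_zero, add_zero]
            have := mul_le_mul_of_nonneg_left hWsum hB1
            linarith
    have hkG : |∑ i, k (p s i) * GN G N i| ≤ nG * (κu * N) := by
      calc |∑ i, k (p s i) * GN G N i| ≤ ∑ i, |k (p s i) * GN G N i| :=
            Finset.abs_sum_le_sum_abs _ _
        _ ≤ ∑ i, k (p s i) * nG := Finset.sum_le_sum fun i _ => by
            rw [abs_mul, abs_of_pos (hkpos s hs i)]
            exact mul_le_mul_of_nonneg_left (hGNle i) (hkpos s hs i).le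
        _ = (∑ i, k (p s i)) * nG := by rw [Finset.sum_mul]
        _ ≤ (κu*N) * nG := mul_le_mul_of_nonneg_right (hSk s hs).2 hnG
        _ = nG * (κu*N) := mul_comm _ _
    have hnum : |∑ j, k (p s j) * (W' (p s j) - GN G N j)|
        ≤ B1*((N:ℝ)*(E+nG)) + (N:ℝ)*B2 + nG * (κu * N) := by
      have heq : ∑ j, k (p s j) * (W' (p s j) - GN G N j)
          = (∑ j, k (p s j) * W' (p s j)) - ∑ j, k (p s j) * GN G N j := by
        rw [← Finset.sum_sub_distrib]
        exact Finset.sum_congr rfl fun j _ => by ring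
      rw [heq]
      calc |(∑ j, k (p s j) * W' (p s j)) - ∑ j, k (p s j) * GN G N j|
          ≤ |∑ j, k (p s j) * W' (p s j)| + |∑ j, k (p s j) * GN G N j| := abs_sub _ _
        _ ≤ _ := add_le_add hkW' hkG
    rw [lamN, abs_div, abs_of_pos (hSkpos s hs)]
    have hC0 : 0 ≤ B1*((N:ℝ)*(E+nG)) + (N:ℝ)*B2 + nG * (κu * N) :=
      le_trans (abs_nonneg _) hnum
    calc |∑ j, k (p s j) * (W' (p s j) - GN G N j)| / (∑ j, k (p s j))
        ≤ (B1*((N:ℝ)*(E+nG)) + (N:ℝ)*B2 + nG * (κu * N)) / (κl * N) :=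
          div_le_div₀ hC0 hnum (by positivity) (hSk s hs).1
      _ = κu/κl*nG + (B1*(E+nG)+B2)/κl := by
          field_simp
          ring
  have hLb : ∀ s ∈ Set.Ici (0:ℝ), ∀ i,
      L ≤ k (p s i) * W'' (p s i)
          + 1/2 * k' (p s i) * (W' (p s i) - GN G N i - lamN k W' G N (p s)) := by
    intro s hs i
    have hx := hpos s hs i
    have h1 := hA3a (p s i) hx
    have h2 := hA3b (p s i) hx
    have h3 := hlam s hs
    have hGi := hGNle i
    have key : |k' (p s i) * (GN G N i + lamN k W' G N (p s))|
        ≤ Ck * (nG + (κu/κl*nG + (B1*(E+nG)+B2)/κl)) := by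
      rw [abs_mul]
      have habs : |GN G N i + lamN k W' G N (p s)|
          ≤ nG + (κu/κl*nG + (B1*(E+nG)+B2)/κl) :=
        (abs_add_le _ _).trans (add_le_add hGi h3)
      exact mul_le_mul h2 habs (abs_nonneg _) hCk
    have key2 := (abs_le.1 key).2
    have hiden : k (p s i) * W'' (p s i)
        + 1/2 * k' (p s i) * (W' (p s i) - GN G N i - lamN k W' G N (p s))
        = (k (p s i) * W'' (p s i) + 1/2 * k' (p s i) * W' (p s i))
          - 1/2 * (k' (p s i) * (GN G N i + lamN k W' G N (p s))) := by ring
    rw [hiden, hLdef, Linf]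
    nlinarith [key2, h1]
  have hDVeq : ∀ s ∈ Set.Ici (0:ℝ), ∃ μ : ℝ, ∀ i,
      DV (p s) (y s) i
        = -(k' (p s i) * y s i) * (W' (p s i) - GN G N i - lamN k W' G N (p s))
          - k (p s i) * (W'' (p s i) * y s i - μ) := by
    intro s hs
    have hq := hpos s hs
    set c : ℝ → Fin N → ℝ := fun u i => p s i + u * y s i with hc
    have hc0f : c 0 = p s := funext fun j => by simp [hc]
    have hcd : ∀ i, HasDerivAt (fun u => c u i) (y s i) 0 := by
      intro i
      simpa [hc] using ((hasDerivAt_id (0:ℝ)).mul_const (y s i)).const_add (p s i)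
    have hkd : ∀ i, HasDerivAt (fun u => k (c u i)) (k' (p s i) * y s i) 0 := by
      intro i
      have h1 : HasDerivAt k (k' (p s i)) ((fun u => c u i) 0) := by
        rw [show (fun u => c u i) 0 = p s i from by simp [hc]]
        exact hk_deriv _ (hq i)
      exact h1.comp 0 (hcd i)
    have hW'd : ∀ i, HasDerivAt (fun u => W' (c u i)) (W'' (p s i) * y s i) 0 := by
      intro i
      have h1 : HasDerivAt W' (W'' (p s i)) ((fun u => c u i) 0) := by
        rw [show (fun u => c u i) 0 = p s i from by simp [hc]]
        exact hW'' _ (hq i)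
      exact h1.comp 0 (hcd i)
    have hden0 : (∑ j, k (c 0 j)) ≠ 0 := by
      rw [show (∑ j, k (c 0 j)) = ∑ j, k (p s j) from by rw [hc0f]]
      exact (hSkpos s hs).ne'
    obtain ⟨μ, hμ⟩ : ∃ μ, HasDerivAt (fun u => lamN k W' G N (c u)) μ 0 := by
      have hnum := HasDerivAt.fun_sum
        (fun j (_ : j ∈ Finset.univ) => (hkd j).mul ((hW'd j).sub_const (GN G N j)))
      have hden := HasDerivAt.fun_sum (fun j (_ : j ∈ Finset.univ) => hkd j)
      exact ⟨_, hnum.div hden hden0⟩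
    refine ⟨μ, fun i => ?_⟩
    have hVi : HasDerivAt (fun u => VN k W' G N (c u))
        (fun i => -(k' (p s i) * y s i) * (W' (p s i) - GN G N i - lamN k W' G N (p s))
            - k (p s i) * (W'' (p s i) * y s i - μ)) 0 := by
      rw [hasDerivAt_pi]
      intro i
      have hA : HasDerivAt (fun u => -(k (c u i))) (-(k' (p s i) * y s i)) 0 := (hkd i).neg
      have hB : HasDerivAt (fun u => W' (c u i) - GN G N i - lamN k W' G N (c u))
          (W'' (p s i) * y s i - μ) 0 := ((hW'd i).sub_const _).sub hμ
      have hAB := hA.mul hB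
      refine hAB.congr_deriv ?_
      rw [show c 0 i = p s i from by rw [hc0f], hc0f]
      ring
    have hchain : HasDerivAt (fun u => VN k W' G N (c u)) (DV (p s) (y s)) 0 := by
      have h1 : HasDerivAt c (y s) 0 := hasDerivAt_pi.2 hcd
      have hF : HasFDerivAt (VN k W' G N) (DV (p s)) (c 0) := by
        rw [hc0f]; exact hDV (p s) hq
      exact hF.comp_hasDerivAt 0 h1
    exact congrFun (hchain.unique hVi) i
  set Q : ℝ → ℝ := fun u => (1/(N:ℝ)) * ∑ i, (y u i)^2 / k (p u i) with hQdef
  have hQpos : ∀ s ∈ Set.Ici (0:ℝ), 0 ≤ Q s := by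
    intro s hs
    have : 0 ≤ ∑ i, (y s i)^2 / k (p s i) :=
      Finset.sum_nonneg fun i _ => div_nonneg (sq_nonneg _) (hkpos s hs i).le
    have h1 : (0:ℝ) ≤ 1/(N:ℝ) := by positivity
    exact mul_nonneg h1 this
  have hQd : ∀ s : ℝ, ∃ D, s ∈ Set.Ici (0:ℝ) →
      HasDerivWithinAt Q D (Set.Ici 0) s ∧
      D ≤ -(2*L) * Q s + 2*ε*Real.sqrt (Q s) := by
    intro s
    by_cases hs : s ∈ Set.Ici (0:ℝ)
    swap
    · exact ⟨0, fun h => absurd h hs⟩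
    have hκu0 : 0 ≤ κu := le_trans hκl.le hκlu
    have hyi : ∀ i, HasDerivWithinAt (fun u => y u i)
        (DV (p s) (y s) i + KN k N (p s) ζ i) (Set.Ici 0) s :=
      fun i => hasDerivWithinAt_pi.1 (hy s hs) i
    have hki : ∀ i, HasDerivWithinAt (fun u => k (p u i))
        (k' (p s i) * VN k W' G N (p s) i) (Set.Ici 0) s :=
      fun i => (hk_deriv (p s i) (hpos s hs i)).comp_hasDerivWithinAt s (hpi s hs i)
    have hterm : ∀ i, HasDerivWithinAt (fun u => (y u i)^2 / k (p u i))
        ((2 * y s i * (DV (p s) (y s) i + KN k N (p s) ζ i) * k (p s i)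
          - (y s i)^2 * (k' (p s i) * VN k W' G N (p s) i)) / (k (p s i))^2)
        (Set.Ici 0) s := by
      intro i
      have hnum : HasDerivWithinAt (fun u => (y u i)^2)
          (2 * y s i * (DV (p s) (y s) i + KN k N (p s) ζ i)) (Set.Ici 0) s := by
        have h2 := (hyi i).pow 2
        norm_num at h2
        exact h2.congr_deriv (by ring)
      exact hnum.div (hki i) (hkpos s hs i).ne'
    have hQder : HasDerivWithinAt Q
        ((1/(N:ℝ)) * ∑ i, ((2 * y s i * (DV (p s) (y s) i + KN k N (p s) ζ i) * k (p s i)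
          - (y s i)^2 * (k' (p s i) * VN k W' G N (p s) i)) / (k (p s i))^2))
        (Set.Ici 0) s :=
      (HasDerivWithinAt.fun_sum fun i (_ : i ∈ Finset.univ) => hterm i).const_mul (1/(N:ℝ))
    refine ⟨_, fun _ => ⟨hQder, ?_⟩⟩
    obtain ⟨μ, hDVi⟩ := hDVeq s hs
    have hy0s := hy0 s hs
    have hS1nn : 0 ≤ ∑ i, (y s i)^2 / k (p s i) :=
      Finset.sum_nonneg fun i _ => div_nonneg (sq_nonneg _) (hkpos s hs i).le
    have hTermEq : ∀ i, (2 * y s i * (DV (p s) (y s) i + KN k N (p s) ζ i) * k (p s i)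
          - (y s i)^2 * (k' (p s i) * VN k W' G N (p s) i)) / (k (p s i))^2
        = -((y s i)^2 / k (p s i)) * (2*(k (p s i) * W'' (p s i)
            + 1/2 * k' (p s i) * (W' (p s i) - GN G N i - lamN k W' G N (p s))))
          + 2 * μ * y s i + 2 * (y s i * (ζ i - lamXi k N (p s) ζ)) := by
      intro i
      have hki0 : k (p s i) ≠ 0 := (hkpos s hs i).ne'
      rw [hDVi i]
      simp only [KN, VN]
      field_simp
      ring
    have hsum_eq : ∑ i, ((2 * y s i * (DV (p s) (y s) i + KN k N (p s) ζ i) * k (p s i)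
          - (y s i)^2 * (k' (p s i) * VN k W' G N (p s) i)) / (k (p s i))^2)
        = (∑ i, -((y s i)^2 / k (p s i)) * (2*(k (p s i) * W'' (p s i)
            + 1/2 * k' (p s i) * (W' (p s i) - GN G N i - lamN k W' G N (p s)))))
          + 2 * μ * (∑ i, y s i) + 2 * (∑ i, y s i * (ζ i - lamXi k N (p s) ζ)) := by
      rw [Finset.sum_congr rfl fun i _ => hTermEq i, Finset.sum_add_distrib,
        Finset.sum_add_distrib, ← Finset.mul_sum, ← Finset.mul_sum]
    have hA : (∑ i, -((y s i)^2 / k (p s i)) * (2*(k (p s i) * W'' (p s i)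
          + 1/2 * k' (p s i) * (W' (p s i) - GN G N i - lamN k W' G N (p s)))))
        ≤ -(2*L) * ∑ i, (y s i)^2 / k (p s i) := by
      rw [Finset.mul_sum]
      refine Finset.sum_le_sum fun i _ => ?_
      have h1 := hLb s hs i
      have h2 : 0 ≤ (y s i)^2 / k (p s i) := div_nonneg (sq_nonneg _) (hkpos s hs i).le
      nlinarith
    have hS2 : ∑ i, k (p s i) * (ζ i - lamXi k N (p s) ζ)^2 ≤ κu * N * M^2 := by
      have hident : ∑ i, k (p s i) * ζ i = lamXi k N (p s) ζ * ∑ i, k (p s i) := by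
        rw [lamXi, div_mul_cancel₀ _ (hSkpos s hs).ne']
      have hexp : ∑ i, k (p s i) * (ζ i - lamXi k N (p s) ζ)^2
          = (∑ i, k (p s i) * (ζ i)^2) - (lamXi k N (p s) ζ)^2 * ∑ i, k (p s i) := by
        have h1 : ∀ i, k (p s i) * (ζ i - lamXi k N (p s) ζ)^2
            = k (p s i) * (ζ i)^2 - (2*lamXi k N (p s) ζ) * (k (p s i) * ζ i)
              + (lamXi k N (p s) ζ)^2 * k (p s i) := fun i => by ring
        rw [Finset.sum_congr rfl fun i _ => h1 i, Finset.sum_add_distrib,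
          Finset.sum_sub_distrib, ← Finset.mul_sum, ← Finset.mul_sum, hident]
        ring
      have h2 : ∑ i, k (p s i) * (ζ i)^2 ≤ κu * N * M^2 := by
        calc ∑ i, k (p s i) * (ζ i)^2 ≤ ∑ i, κu * p s i * M^2 := by
              refine Finset.sum_le_sum fun i _ => ?_
              have hb := (hk_bnd _ (hpos s hs i).le).2
              have hz : (ζ i)^2 ≤ M^2 := by
                have h3 := hM i
                nlinarith [abs_nonneg (ζ i), sq_abs (ζ i)]
              have h4 := mul_le_mul_of_nonneg_right hb (sq_nonneg (ζ i))
              have h5 := mul_le_mul_of_nonneg_left hz (le_trans (hkpos s hs i).le hb)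
              linarith
          _ = κu * N * M^2 := by
              rw [← Finset.sum_mul, ← Finset.mul_sum, hsum s hs]
      have h3 : 0 ≤ (lamXi k N (p s) ζ)^2 * ∑ i, k (p s i) :=
        mul_nonneg (sq_nonneg _) (hSkpos s hs).le
      linarith
    have hCS : (∑ i, y s i * (ζ i - lamXi k N (p s) ζ))^2
        ≤ (∑ i, (y s i)^2 / k (p s i)) * ∑ i, k (p s i) * (ζ i - lamXi k N (p s) ζ)^2 := by
      have h1 : ∀ i, y s i * (ζ i - lamXi k N (p s) ζ)
          = (y s i / Real.sqrt (k (p s i)))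
            * (Real.sqrt (k (p s i)) * (ζ i - lamXi k N (p s) ζ)) := by
        intro i
        have h2 : Real.sqrt (k (p s i)) ≠ 0 := (Real.sqrt_pos.2 (hkpos s hs i)).ne'
        field_simp
        try ring
      have h2 : ∀ i, (y s i / Real.sqrt (k (p s i)))^2 = (y s i)^2 / k (p s i) := by
        intro i
        rw [div_pow, Real.sq_sqrt (hkpos s hs i).le]
      have h3 : ∀ i, (Real.sqrt (k (p s i)) * (ζ i - lamXi k N (p s) ζ))^2
          = k (p s i) * (ζ i - lamXi k N (p s) ζ)^2 := by
        intro i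
        rw [mul_pow, Real.sq_sqrt (hkpos s hs i).le]
      calc (∑ i, y s i * (ζ i - lamXi k N (p s) ζ))^2
          = (∑ i, (y s i / Real.sqrt (k (p s i)))
              * (Real.sqrt (k (p s i)) * (ζ i - lamXi k N (p s) ζ)))^2 := by
            rw [Finset.sum_congr rfl fun i _ => h1 i]
        _ ≤ (∑ i, (y s i / Real.sqrt (k (p s i)))^2)
              * ∑ i, (Real.sqrt (k (p s i)) * (ζ i - lamXi k N (p s) ζ))^2 :=
            Finset.sum_mul_sq_le_sq_mul_sq _ _ _
        _ = _ := by
            rw [Finset.sum_congr rfl fun i _ => h2 i, Finset.sum_congr rfl fun i _ => h3 i]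
    have hcross : ∑ i, y s i * (ζ i - lamXi k N (p s) ζ)
        ≤ Real.sqrt (∑ i, (y s i)^2 / k (p s i)) * (Real.sqrt κu * Real.sqrt N * M) := by
      have h4 : (∑ i, y s i * (ζ i - lamXi k N (p s) ζ))^2
          ≤ (∑ i, (y s i)^2 / k (p s i)) * (κu * N * M^2) :=
        le_trans hCS (mul_le_mul_of_nonneg_left hS2 hS1nn)
      calc ∑ i, y s i * (ζ i - lamXi k N (p s) ζ)
          ≤ |∑ i, y s i * (ζ i - lamXi k N (p s) ζ)| := le_abs_self _
        _ = Real.sqrt ((∑ i, y s i * (ζ i - lamXi k N (p s) ζ))^2) :=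
            (Real.sqrt_sq_eq_abs _).symm
        _ ≤ Real.sqrt ((∑ i, (y s i)^2 / k (p s i)) * (κu * N * M^2)) := Real.sqrt_le_sqrt h4
        _ = Real.sqrt (∑ i, (y s i)^2 / k (p s i)) * (Real.sqrt κu * Real.sqrt N * M) := by
            rw [Real.sqrt_mul hS1nn, Real.sqrt_mul (mul_nonneg hκu0 hNR.le),
              Real.sqrt_mul hκu0, Real.sqrt_sq hM0]
            try ring
    calc (1/(N:ℝ)) * ∑ i, ((2 * y s i * (DV (p s) (y s) i + KN k N (p s) ζ i) * k (p s i)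
          - (y s i)^2 * (k' (p s i) * VN k W' G N (p s) i)) / (k (p s i))^2)
        = (1/(N:ℝ)) * ((∑ i, -((y s i)^2 / k (p s i)) * (2*(k (p s i) * W'' (p s i)
            + 1/2 * k' (p s i) * (W' (p s i) - GN G N i - lamN k W' G N (p s)))))
          + 2 * (∑ i, y s i * (ζ i - lamXi k N (p s) ζ))) := by
          rw [hsum_eq, hy0s]; ring
      _ ≤ (1/(N:ℝ)) * ((-(2*L) * ∑ i, (y s i)^2 / k (p s i))
          + 2 * (Real.sqrt (∑ i, (y s i)^2 / k (p s i)) * (Real.sqrt κu * Real.sqrt N * M))) := by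
          have h6 := add_le_add hA (mul_le_mul_of_nonneg_left hcross (by norm_num : (0:ℝ) ≤ 2))
          exact mul_le_mul_of_nonneg_left h6 (by positivity)
      _ = -(2*L) * Q s + 2*ε*Real.sqrt (Q s) := by
          have hQs : Q s = (1/(N:ℝ)) * ∑ i, (y s i)^2 / k (p s i) := rfl
          have hsq : Real.sqrt (Q s)
              = Real.sqrt (∑ i, (y s i)^2 / k (p s i)) / Real.sqrt (N:ℝ) := by
            rw [hQs, show (1/(N:ℝ)) * ∑ i, (y s i)^2 / k (p s i)
                = (∑ i, (y s i)^2 / k (p s i))/(N:ℝ) from by ring,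
              Real.sqrt_div hS1nn]
          have hNs : Real.sqrt (N:ℝ) * Real.sqrt (N:ℝ) = (N:ℝ) := Real.mul_self_sqrt hNR.le
          have hsN : Real.sqrt (N:ℝ) ≠ 0 := by positivity
          rw [hsq, hQs, hεdef]
          field_simp
          linear_combination (Real.sqrt (∑ i, (y s i)^2 / k (p s i))
            * Real.sqrt κu * M) * hNs
  choose Dq hDq using hQd
  have hgron : ∀ d : ℝ, 0 < d →
      Real.sqrt (Q t + d)
        ≤ gronwallBound (Real.sqrt (Q 0 + d)) (-L) (ε + |L| * Real.sqrt d) t := by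
    intro d hd
    have hQdiff : ∀ s ∈ Set.Ici (0:ℝ),
        HasDerivWithinAt (fun u => Real.sqrt (Q u + d))
          (Dq s / (2 * Real.sqrt (Q s + d))) (Set.Ici 0) s := by
      intro s hs
      have h1 : HasDerivWithinAt (fun u => Q u + d) (Dq s) (Set.Ici 0) s :=
        ((hDq s hs).1).add_const d
      have hpos' : Q s + d ≠ 0 := ne_of_gt (by linarith [hQpos s hs] : (0:ℝ) < Q s + d)
      have h2 : HasDerivAt Real.sqrt (1 / (2 * Real.sqrt (Q s + d))) (Q s + d) :=
        Real.hasDerivAt_sqrt hpos'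
      have h3 := h2.comp_hasDerivWithinAt s h1
      exact h3.congr_deriv (by ring)
    have hcont : ContinuousOn (fun u => Real.sqrt (Q u + d)) (Set.Icc 0 t) :=
      fun u hu => ((hQdiff u hu.1).continuousWithinAt).mono Set.Icc_subset_Ici_self
    have hbound : ∀ s ∈ Set.Ico (0:ℝ) t,
        Dq s / (2 * Real.sqrt (Q s + d))
          ≤ (-L) * Real.sqrt (Q s + d) + (ε + |L| * Real.sqrt d) := by
      intro s hs
      have hQs0 := hQpos s hs.1
      have hΦpos : 0 < Real.sqrt (Q s + d) := Real.sqrt_pos.2 (by linarith)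
      have hΦsq : Real.sqrt (Q s + d) * Real.sqrt (Q s + d) = Q s + d :=
        Real.mul_self_sqrt (by linarith)
      have hsqQ : Real.sqrt (Q s) ≤ Real.sqrt (Q s + d) := Real.sqrt_le_sqrt (by linarith)
      have hdd : Real.sqrt d * Real.sqrt d = d := Real.mul_self_sqrt hd.le
      have hdΦ : Real.sqrt d ≤ Real.sqrt (Q s + d) := Real.sqrt_le_sqrt (by linarith)
      have hDle := (hDq s hs.1).2
      rw [div_le_iff₀ (by positivity)]
      have hLabs : L ≤ |L| := le_abs_self L
      have hsqQ0 : 0 ≤ Real.sqrt (Q s) := Real.sqrt_nonneg _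
      have hLΦ : L * (Real.sqrt (Q s + d) * Real.sqrt (Q s + d)) = L * (Q s + d) := by
        rw [hΦsq]
      have hAd : |L| * (Real.sqrt d * Real.sqrt d) = |L| * d := by rw [hdd]
      have hLd : L * d ≤ |L| * d := mul_le_mul_of_nonneg_right hLabs hd.le
      linarith [mul_le_mul_of_nonneg_left hsqQ (by linarith : (0:ℝ) ≤ 2*ε),
        mul_nonneg (mul_nonneg (abs_nonneg L) (Real.sqrt_nonneg d)) (sub_nonneg.2 hdΦ),
        hDle, hLΦ, hAd, hLd]
    have hg := gronwall_real hcont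
      (fun s hs => (hQdiff s hs.1).mono (Set.Ici_subset_Ici.2 hs.1))
      (le_refl _) hbound
    simpa using hg t ⟨ht0, le_rfl⟩
  have hfinal : Real.sqrt (Q t) ≤ gronwallBound (Real.sqrt (Q 0)) (-L) ε t := by
    rw [gronwallBound_eq]
    have h1 : Tendsto (fun d : ℝ => Real.sqrt (Q 0 + d) * Real.exp (-L*t)
        + (ε + |L| * Real.sqrt d) * gronwallBound 0 (-L) 1 t) (𝓝[>] (0:ℝ))
        (𝓝 (Real.sqrt (Q 0) * Real.exp (-L*t) + ε * gronwallBound 0 (-L) 1 t)) := by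
      have hA : Tendsto (fun d : ℝ => Real.sqrt (Q 0 + d)) (𝓝[>] (0:ℝ))
          (𝓝 (Real.sqrt (Q 0))) := by
        have hc : Continuous (fun d : ℝ => Real.sqrt (Q 0 + d)) :=
          Real.continuous_sqrt.comp (continuous_const.add continuous_id)
        have h2 := hc.tendsto 0
        simpa using h2.mono_left nhdsWithin_le_nhds
      have hB : Tendsto (fun d : ℝ => ε + |L| * Real.sqrt d) (𝓝[>] (0:ℝ)) (𝓝 ε) := by
        have hc : Continuous (fun d : ℝ => ε + |L| * Real.sqrt d) :=
          continuous_const.add (continuous_const.mul Real.continuous_sqrt)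
        have h2 := hc.tendsto 0
        simpa using h2.mono_left nhdsWithin_le_nhds
      exact (hA.mul_const _).add (hB.mul_const _)
    refine ge_of_tendsto h1 ?_
    filter_upwards [self_mem_nhdsWithin] with d hd
    have h2 := hgron d hd
    rw [gronwallBound_eq] at h2
    exact le_trans (Real.sqrt_le_sqrt (by linarith [le_of_lt (Set.mem_Ioi.1 hd)] : Q t ≤ Q t + d)) h2
  have hI : (∫ s in (0:ℝ)..t, Real.exp (-L*s)) = gronwallBound 0 (-L) 1 t := by
    by_cases hL : L = 0
    · simp only [hL, neg_zero, zero_mul, Real.exp_zero]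
      simp [gronwallBound]
    · have hK : (-L) ≠ 0 := neg_ne_zero.2 hL
      have h1 := intExpAux (-L) 0 t hK
      rw [h1]
      simp only [gronwallBound, if_neg hK, mul_zero, Real.exp_zero, zero_mul, zero_add]
      field_simp
  show Real.sqrt (Q t) ≤ Real.exp (-L * t) * Real.sqrt (Q 0)
      + (∫ s in (0:ℝ)..t, Real.exp (-L*s)) * Real.sqrt κu * M
  rw [gronwallBound_eq] at hfinal
  rw [hI]
  calc Real.sqrt (Q t)
      ≤ Real.sqrt (Q 0) * Real.exp (-L * t) + ε * gronwallBound 0 (-L) 1 t := hfinal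
    _ = Real.exp (-L * t) * Real.sqrt (Q 0)
        + gronwallBound 0 (-L) 1 t * Real.sqrt κu * M := by rw [hεdef]; ring
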